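/- Let 1 < p < ∞. There exist constants c, C > 0, depending only on p, such that for every Lebesgue-measurable f : (0,∞) → ℝ: c · (∑_{j∈ℤ} 2^{j(1−p)} (∫_{Δ_j} |f(t)| dt)^p)^{1/p} ≤ ‖f‖_{Ces_p} ≤ C · (∑_{j∈ℤ} 2^{j(1−p)} (∫_{Δ_j} |f(t)| dt)^p)^{1/p}, as an inequality of values in [0,∞]. -/

import Mathlib

open ENNReal MeasureTheory

/-- The Cesàro norm `‖f‖_{Ces_p} = (∫_0^∞ ((1/x)∫_0^x |f(t)| dt)^p dx)^{1/p}`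
of a function on `(0,∞)`, with all integrals Lebesgue integrals. -/
noncomputable def CesNorm (p : ℝ) (f : ℝ → ℝ) : ℝ≥0∞ :=
  (∫⁻ x in Set.Ioi (0 : ℝ),
      ((ENNReal.ofReal x)⁻¹ * ∫⁻ t in Set.Ioc (0 : ℝ) x, ENNReal.ofReal |f t|) ^ p) ^ (1 / p)

/-- The block form expression
`(∑_{j∈ℤ} 2^{j(1−p)} (∫_{Δ_j} |f(t)| dt)^p)^{1/p}`, where `Δ_j = [2^j, 2^{j+1})`. -/
noncomputable def CesBlock (p : ℝ) (f : ℝ → ℝ) : ℝ≥0∞ :=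
  (∑' j : ℤ, (2 : ℝ≥0∞) ^ ((j : ℝ) * (1 - p)) *
      (∫⁻ t in Set.Ico ((2 : ℝ) ^ j) ((2 : ℝ) ^ (j + 1)), ENNReal.ofReal |f t|) ^ p) ^ (1 / p)

/-!
Write `F x = ∫_{(0,x]} |f|` and `a j = ∫_{Δ_j} |f|`. On `Δ_k` the mean `F x / x` lies between
`F (2^k) / 2^(k+1)` and `F (2^(k+1)) / 2^k`, so `‖f‖_{Ces_p}^p` is comparable to
`∑ k, 2^(k(1-p)) F (2^(k+1))^p`; as `a k ≤ F (2^(k+1))` this gives the lower bound. For the upper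
bound, `F (2^(k+1)) = ∑_{i ≥ 0} a (k - i)`, so with `b j = 2^(j(1-p)/p) a j` the sequence
`2^((k+1)(1-p)/p) F (2^(k+1))` is the convolution of `b` with the geometric kernel
`i ↦ 2^((i+1)(1-p)/p)` on `ℕ`. Young's inequality `‖κ * b‖_p ≤ ‖κ‖_1 ‖b‖_p`, which follows from the
weighted Hölder inequality, then gives the constant `C = (1 - 2^((1-p)/p))⁻¹`.
-/

open Set Function

namespace ENNReal

theorem two_rpow_add (u v : ℝ) : (2 : ℝ≥0∞) ^ (u + v) = 2 ^ u * 2 ^ v :=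
  rpow_add u v two_ne_zero ofNat_ne_top

theorem rpow_mul_rpow_one_div {p : ℝ} (hp : 0 < p) (x y : ℝ≥0∞) :
    (x ^ p * y) ^ (1 / p) = x * y ^ (1 / p) := by
  rw [mul_rpow_of_nonneg _ _ (by positivity), ← rpow_mul, mul_one_div_cancel hp.ne', rpow_one]

theorem tsum_mul_le_weight_mul_Lp {ι : Type*} {p : ℝ} (hp : 1 ≤ p) (w f : ι → ℝ≥0∞) :
    ∑' i, w i * f i ≤ (∑' i, w i) ^ (1 - p⁻¹) * (∑' i, w i * f i ^ p) ^ p⁻¹ := by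
  rw [ENNReal.tsum_eq_iSup_sum]
  refine iSup_le fun s => (inner_le_weight_mul_Lp_of_nonneg s hp w f).trans ?_
  gcongr
  · exact sub_nonneg.2 (inv_le_one_of_one_le₀ hp)
  · exact ENNReal.sum_le_tsum s
  · exact ENNReal.sum_le_tsum s

theorem tsum_mul_rpow_le {ι : Type*} {p : ℝ} (hp : 1 ≤ p) (w f : ι → ℝ≥0∞) :
    (∑' i, w i * f i) ^ p ≤ (∑' i, w i) ^ (p - 1) * ∑' i, w i * f i ^ p := by
  have hp₀ : 0 < p := zero_lt_one.trans_le hp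
  calc (∑' i, w i * f i) ^ p
      ≤ ((∑' i, w i) ^ (1 - p⁻¹) * (∑' i, w i * f i ^ p) ^ p⁻¹) ^ p := by
        gcongr; exact tsum_mul_le_weight_mul_Lp hp w f
    _ = (∑' i, w i) ^ (p - 1) * ∑' i, w i * f i ^ p := by
        rw [mul_rpow_of_nonneg _ _ hp₀.le, ← rpow_mul, ← rpow_mul, inv_mul_cancel₀ hp₀.ne',
          rpow_one, sub_mul, one_mul, inv_mul_cancel₀ hp₀.ne']

theorem tsum_rpow_tsum_mul_sub_le {p : ℝ} (hp : 1 ≤ p) (k : ℕ → ℝ≥0∞) (b : ℤ → ℝ≥0∞) :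
    ∑' m : ℤ, (∑' i : ℕ, k i * b (m - i)) ^ p ≤ (∑' i, k i) ^ p * ∑' m, b m ^ p := by
  calc ∑' m : ℤ, (∑' i : ℕ, k i * b (m - i)) ^ p
      ≤ ∑' m : ℤ, (∑' i, k i) ^ (p - 1) * ∑' i : ℕ, k i * b (m - i) ^ p :=
        ENNReal.tsum_le_tsum fun m => tsum_mul_rpow_le hp _ _
    _ = (∑' i, k i) ^ (p - 1) * ∑' i : ℕ, k i * ∑' m : ℤ, b (m - i) ^ p := by
        rw [ENNReal.tsum_mul_left, ENNReal.tsum_comm]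
        simp_rw [ENNReal.tsum_mul_left]
    _ = (∑' i, k i) ^ (p - 1) * ((∑' i, k i) * ∑' m, b m ^ p) := by
        have hshift (i : ℕ) : ∑' m : ℤ, b (m - i) ^ p = ∑' m, b m ^ p :=
          (Equiv.subRight (i : ℤ)).tsum_eq (fun m => b m ^ p)
        simp_rw [hshift, ENNReal.tsum_mul_right]
    _ = (∑' i, k i) ^ p * ∑' m, b m ^ p := by
        rw [← mul_assoc]
        congr 1
        conv_rhs => rw [← sub_add_cancel p 1, rpow_add_of_nonneg _ _ (by linarith) zero_le_one,
          rpow_one]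

end ENNReal

section Dyadic

variable {α : Type*} [Field α] [LinearOrder α] [IsStrictOrderedRing α]

theorem pairwise_disjoint_Ico_zpow_of_one_le {b : α} (hb : 1 ≤ b) :
    Pairwise (Disjoint on fun n : ℤ => Ico (b ^ n) (b ^ (n + 1))) := by
  simpa only [Order.succ_eq_add_one] using (zpow_right_mono₀ hb).pairwise_disjoint_on_Ico_succ

theorem iUnion_Ico_zpow [Archimedean α] {b : α} (hb : 1 < b) :
    ⋃ n : ℤ, Ico (b ^ n) (b ^ (n + 1)) = Ioi 0 := by
  ext x
  simp only [mem_iUnion, mem_Ioi]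
  refine ⟨fun ⟨n, hn⟩ => (zpow_pos (zero_lt_one.trans hb) n).trans_le hn.1,
    fun hx => exists_mem_Ico_zpow hx hb⟩

theorem iUnion_Ico_zpow_sub_natCast [Archimedean α] {b : α} (hb : 1 < b) (k : ℤ) :
    ⋃ i : ℕ, Ico (b ^ (k - i)) (b ^ (k - i + 1)) = Ioo 0 (b ^ (k + 1)) := by
  ext x
  simp only [mem_iUnion, mem_Ico, mem_Ioo]
  constructor
  · rintro ⟨i, hi, hi'⟩
    exact ⟨(zpow_pos (zero_lt_one.trans hb) _).trans_le hi,
      hi'.trans_le (zpow_le_zpow_right₀ hb.le (by omega))⟩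
  · rintro ⟨hx, hxk⟩
    obtain ⟨n, hn, hn'⟩ := exists_mem_Ico_zpow hx hb
    have hnk : n ≤ k := by
      by_contra! h
      exact hxk.not_ge ((zpow_le_zpow_right₀ hb.le (show k + 1 ≤ n by omega)).trans hn)
    refine ⟨(k - n).toNat, ?_⟩
    rw [Int.toNat_of_nonneg (by omega), _root_.sub_sub_cancel]
    exact ⟨hn, hn'⟩

end Dyadic

theorem lintegral_Ioi_eq_tsum_Ico_zpow {b : ℝ} (hb : 1 < b) (g : ℝ → ℝ≥0∞) :
    ∫⁻ x in Ioi 0, g x = ∑' n : ℤ, ∫⁻ x in Ico (b ^ n) (b ^ (n + 1)), g x := by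
  rw [← iUnion_Ico_zpow hb,
    lintegral_iUnion (fun _ => measurableSet_Ico) (pairwise_disjoint_Ico_zpow_of_one_le hb.le)]

theorem lintegral_Ioc_zpow_eq_tsum {b : ℝ} (hb : 1 < b) (g : ℝ → ℝ≥0∞) (k : ℤ) :
    ∫⁻ x in Ioc 0 (b ^ (k + 1)), g x
      = ∑' i : ℕ, ∫⁻ x in Ico (b ^ (k - i)) (b ^ (k - i + 1)), g x := by
  have hinj : Function.Injective fun i : ℕ => k - i := fun i j h => by simpa using h
  rw [← setLIntegral_congr Ioo_ae_eq_Ioc, ← iUnion_Ico_zpow_sub_natCast hb,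
    lintegral_iUnion (fun _ => measurableSet_Ico)
      ((pairwise_disjoint_Ico_zpow_of_one_le hb.le).comp_of_injective hinj)]

theorem setLIntegral_Ico_inv_mul_rpow_le {F : ℝ → ℝ≥0∞} (hF : Monotone F) {p : ℝ} (hp : 0 ≤ p)
    (a b : ℝ) :
    ∫⁻ x in Ico a b, ((ENNReal.ofReal x)⁻¹ * F x) ^ p
      ≤ volume (Ico a b) * ((ENNReal.ofReal a)⁻¹ * F b) ^ p := by
  rw [mul_comm, ← setLIntegral_const]
  refine setLIntegral_mono' measurableSet_Ico fun x hx => ?_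
  gcongr
  exacts [hx.1, hF hx.2.le]

theorem le_setLIntegral_Ico_inv_mul_rpow {F : ℝ → ℝ≥0∞} (hF : Monotone F) {p : ℝ} (hp : 0 ≤ p)
    (a b : ℝ) :
    volume (Ico a b) * ((ENNReal.ofReal b)⁻¹ * F a) ^ p
      ≤ ∫⁻ x in Ico a b, ((ENNReal.ofReal x)⁻¹ * F x) ^ p := by
  rw [mul_comm, ← setLIntegral_const]
  refine setLIntegral_mono' measurableSet_Ico fun x hx => ?_
  gcongr
  exacts [hx.2.le, hF hx.1]

namespace Cesaro

noncomputable def absPrimitive (f : ℝ → ℝ) (x : ℝ) : ℝ≥0∞ :=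
  ∫⁻ t in Ioc 0 x, ENNReal.ofReal |f t|

noncomputable def dyadicBlock (f : ℝ → ℝ) (j : ℤ) : ℝ≥0∞ :=
  ∫⁻ t in Ico ((2 : ℝ) ^ j) ((2 : ℝ) ^ (j + 1)), ENNReal.ofReal |f t|

theorem monotone_absPrimitive (f : ℝ → ℝ) : Monotone (absPrimitive f) := fun _ _ h =>
  lintegral_mono_set (Ioc_subset_Ioc_right h)

theorem absPrimitive_two_zpow_add_one (f : ℝ → ℝ) (k : ℤ) :
    absPrimitive f (2 ^ (k + 1)) = ∑' i : ℕ, dyadicBlock f (k - i) :=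
  lintegral_Ioc_zpow_eq_tsum one_lt_two _ k

theorem dyadicBlock_le_absPrimitive (f : ℝ → ℝ) (k : ℤ) :
    dyadicBlock f k ≤ absPrimitive f (2 ^ (k + 1)) :=
  lintegral_mono_set fun _ hx => ⟨(zpow_pos two_pos k).trans_le hx.1, hx.2.le⟩

theorem ofReal_two_zpow (k : ℤ) : ENNReal.ofReal ((2 : ℝ) ^ k) = 2 ^ (k : ℝ) := by
  rw [← Real.rpow_intCast, ← ENNReal.ofReal_rpow_of_pos two_pos, ofReal_ofNat]

theorem volume_Ico_two_zpow (k : ℤ) :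
    volume (Ico ((2 : ℝ) ^ k) (2 ^ (k + 1))) = 2 ^ (k : ℝ) := by
  rw [Real.volume_Ico, zpow_add_one₀ two_ne_zero, mul_two, add_sub_cancel_right, ofReal_two_zpow]

theorem le_setLIntegral_Ico_two_zpow (f : ℝ → ℝ) {p : ℝ} (hp : 0 ≤ p) (k : ℤ) :
    2 ^ (1 - 2 * p) * (2 ^ ((k : ℝ) * (1 - p)) * dyadicBlock f k ^ p)
      ≤ ∫⁻ x in Ico ((2 : ℝ) ^ (k + 1)) (2 ^ (k + 1 + 1)),
          ((ENNReal.ofReal x)⁻¹ * absPrimitive f x) ^ p := by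
  refine le_trans ?_ (le_setLIntegral_Ico_inv_mul_rpow (monotone_absPrimitive f) hp _ _)
  rw [volume_Ico_two_zpow, ofReal_two_zpow, ← rpow_neg, mul_rpow_of_nonneg _ _ hp, ← rpow_mul,
    ← mul_assoc, ← mul_assoc, ← two_rpow_add, ← two_rpow_add]
  calc 2 ^ (1 - 2 * p + (k : ℝ) * (1 - p)) * dyadicBlock f k ^ p
      = 2 ^ (((k + 1 : ℤ) : ℝ) + -((k + 1 + 1 : ℤ) : ℝ) * p) * dyadicBlock f k ^ p := by
        push_cast; ring_nf
    _ ≤ _ := by gcongr; exact dyadicBlock_le_absPrimitive f k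

theorem setLIntegral_Ico_two_zpow_le (f : ℝ → ℝ) {p : ℝ} (hp : 0 < p) (k : ℤ) :
    ∫⁻ x in Ico ((2 : ℝ) ^ k) (2 ^ (k + 1)), ((ENNReal.ofReal x)⁻¹ * absPrimitive f x) ^ p
      ≤ 2 ^ (p - 1) *
          (2 ^ (((k : ℝ) + 1) * ((1 - p) / p)) * absPrimitive f (2 ^ (k + 1))) ^ p := by
  refine (setLIntegral_Ico_inv_mul_rpow_le (monotone_absPrimitive f) hp.le _ _).trans_eq ?_
  rw [volume_Ico_two_zpow, ofReal_two_zpow, ← rpow_neg, mul_rpow_of_nonneg _ _ hp.le,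
    mul_rpow_of_nonneg _ _ hp.le, ← rpow_mul, ← rpow_mul, ← mul_assoc, ← mul_assoc,
    ← two_rpow_add, ← two_rpow_add]
  congr 2
  field_simp
  ring

theorem two_rpow_mul_tsum_dyadicBlock_le_lintegral (f : ℝ → ℝ) {p : ℝ} (hp : 0 ≤ p) :
    2 ^ (1 - 2 * p) * ∑' j : ℤ, 2 ^ ((j : ℝ) * (1 - p)) * dyadicBlock f j ^ p
      ≤ ∫⁻ x in Ioi 0, ((ENNReal.ofReal x)⁻¹ * absPrimitive f x) ^ p := by
  rw [lintegral_Ioi_eq_tsum_Ico_zpow one_lt_two, ← ENNReal.tsum_mul_left]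
  conv_rhs => rw [← (Equiv.addRight 1).tsum_eq]
  exact ENNReal.tsum_le_tsum (le_setLIntegral_Ico_two_zpow f hp)

theorem lintegral_rpow_le_tsum_dyadicBlock (f : ℝ → ℝ) {p : ℝ} (hp : 1 < p) :
    ∫⁻ x in Ioi 0, ((ENNReal.ofReal x)⁻¹ * absPrimitive f x) ^ p
      ≤ (1 - 2 ^ ((1 - p) / p))⁻¹ ^ p *
          ∑' j : ℤ, 2 ^ ((j : ℝ) * (1 - p)) * dyadicBlock f j ^ p := by
  have hp₀ : 0 < p := zero_lt_one.trans hp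
  set s := (1 - p) / p with hs
  have hsp : s * p = 1 - p := by rw [hs]; field_simp
  let b : ℤ → ℝ≥0∞ := fun j => 2 ^ ((j : ℝ) * s) * dyadicBlock f j
  have hb (j : ℤ) : b j ^ p = 2 ^ ((j : ℝ) * (1 - p)) * dyadicBlock f j ^ p := by
    rw [mul_rpow_of_nonneg _ _ hp₀.le, ← rpow_mul, mul_assoc, hsp]
  have hkernel : ∑' i : ℕ, (2 : ℝ≥0∞) ^ (((i : ℝ) + 1) * s) = 2 ^ s * (1 - 2 ^ s)⁻¹ := by
    have hterm (i : ℕ) : (2 : ℝ≥0∞) ^ (((i : ℝ) + 1) * s) = 2 ^ s * (2 ^ s) ^ i := by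
      rw [← rpow_natCast, ← rpow_mul, ← two_rpow_add]
      ring_nf
    simp_rw [hterm, ENNReal.tsum_mul_left, ENNReal.tsum_geometric]
  calc ∫⁻ x in Ioi 0, ((ENNReal.ofReal x)⁻¹ * absPrimitive f x) ^ p
      ≤ ∑' k : ℤ, 2 ^ (p - 1) * (∑' i : ℕ, 2 ^ (((i : ℝ) + 1) * s) * b (k - i)) ^ p := by
        rw [lintegral_Ioi_eq_tsum_Ico_zpow one_lt_two]
        refine ENNReal.tsum_le_tsum fun k => (setLIntegral_Ico_two_zpow_le f hp₀ k).trans_eq ?_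
        rw [absPrimitive_two_zpow_add_one, ← ENNReal.tsum_mul_left]
        congr 3 with i
        rw [← mul_assoc, ← two_rpow_add]
        congr 2
        push_cast
        ring
    _ ≤ 2 ^ (p - 1) * ((∑' i : ℕ, (2 : ℝ≥0∞) ^ (((i : ℝ) + 1) * s)) ^ p * ∑' j, b j ^ p) := by
        rw [ENNReal.tsum_mul_left]
        gcongr
        exact tsum_rpow_tsum_mul_sub_le hp.le _ b
    _ = (1 - 2 ^ s)⁻¹ ^ p * ∑' j : ℤ, 2 ^ ((j : ℝ) * (1 - p)) * dyadicBlock f j ^ p := by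
        rw [hkernel, mul_rpow_of_nonneg _ _ hp₀.le, ← rpow_mul, hsp, ← mul_assoc, ← mul_assoc,
          ← two_rpow_add, sub_add_sub_cancel', sub_self, rpow_zero, one_mul]
        simp_rw [hb]

end Cesaro

open Cesaro

/-- Block form representation of `Ces_p`. -/
theorem stmt_3 (p : ℝ) (hp : 1 < p) :
    ∃ c C : ℝ, 0 < c ∧ 0 < C ∧ ∀ f : ℝ → ℝ, Measurable f →
      ENNReal.ofReal c * CesBlock p f ≤ CesNorm p f ∧
        CesNorm p f ≤ ENNReal.ofReal C * CesBlock p f := by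
  have hp₀ : 0 < p := zero_lt_one.trans hp
  have hρ : (2 : ℝ) ^ ((1 - p) / p) < 1 :=
    Real.rpow_lt_one_of_one_lt_of_neg one_lt_two (div_neg_of_neg_of_pos (by linarith) hp₀)
  refine ⟨2 ^ ((1 - 2 * p) / p), (1 - 2 ^ ((1 - p) / p))⁻¹, by positivity,
    inv_pos.2 (sub_pos.2 hρ), fun f _ => ⟨?_, ?_⟩⟩
  · have hc : ENNReal.ofReal (2 ^ ((1 - 2 * p) / p)) ^ p = 2 ^ (1 - 2 * p) := by
      rw [← ofReal_rpow_of_pos two_pos, ofReal_ofNat, ← rpow_mul, div_mul_cancel₀ _ hp₀.ne']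
    rw [CesBlock, CesNorm, ← rpow_mul_rpow_one_div hp₀, hc]
    exact rpow_le_rpow (two_rpow_mul_tsum_dyadicBlock_le_lintegral f hp₀.le) (by positivity)
  · have hC : ENNReal.ofReal (1 - 2 ^ ((1 - p) / p))⁻¹ = (1 - 2 ^ ((1 - p) / p))⁻¹ := by
      rw [ofReal_inv_of_pos (sub_pos.2 hρ), ofReal_sub _ (by positivity), ofReal_one,
        ← ofReal_rpow_of_pos two_pos, ofReal_ofNat]
    rw [CesBlock, CesNorm, hC, ← rpow_mul_rpow_one_div hp₀]
    exact rpow_le_rpow (lintegral_rpow_le_tsum_dyadicBlock f hp) (by positivity)
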